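/- Let q be a real number with q > 1 and m ≥ 1 an integer. For 1 ≤ k ≤ m define a2_k = (1-q) · q^{-2k^2-k} / (q^{-2};q^{-2})_{k-1} · ( (q^{-2k};q^{-2})_{m-k} / (q^{-2};q^{-2})_{m-k} ) · q^{-m+k}. Then Σ_{k=1}^{m} a2_k = q^{-m} (1-q) · Σ_{s=0}^{m-1} (-1)^s ( (q^{2m-2}; q^{-2})_s / ( (q^{-2}; q^{-2})_s )^2 ) · q^{-s^2 - 3s - 2sm - 2}. -/

import Mathlib

/-!
Write `P j = (q⁻²; q⁻²)_j` and compare the sums term by term, with `k = s + 1` and `n = m - k`.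
Splitting the product gives `(q^{-2k}; q⁻²)_n = P (s + n) / P s`. Reversing the order of the
factors of `(q^{2m-2}; q⁻²)_s` gives `(-q^{2m-2})^s q^{-s(s-1)} (q^{-2(n+1)}; q⁻²)_s`, and the last
factor is `P (s + n) / P n`. Both terms thus become `(1 - q) P (m - 1) / (P s ^ 2 P n)` times a
power of `q`, and the exponents agree.
-/

noncomputable def qPoch (a Q : ℝ) (n : ℕ) : ℝ := ∏ j ∈ Finset.range n, (1 - a * Q ^ j)

open Finset

theorem qPoch_add (a Q : ℝ) (x y : ℕ) :
    qPoch a Q (x + y) = qPoch a Q x * qPoch (a * Q ^ x) Q y := by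
  simp only [qPoch, prod_range_add, pow_add, mul_assoc]

theorem qPoch_pos {a Q : ℝ} (ha₀ : 0 ≤ a) (ha₁ : a < 1) (hQ₀ : 0 ≤ Q) (hQ₁ : Q ≤ 1) (n : ℕ) :
    0 < qPoch a Q n :=
  prod_pos fun _ _ => sub_pos.2 <| (mul_le_of_le_one_right ha₀ (pow_le_one₀ hQ₀ hQ₁)).trans_lt ha₁

theorem qPoch_eq_neg_pow_mul_qPoch {a b Q : ℝ} {n : ℕ} (hQ : Q ≠ 0) (hab : a * b * Q ^ n = Q) :
    qPoch a Q n = (-a) ^ n * Q ^ n.choose 2 * qPoch b Q n := by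
  have hfactor : ∀ j ∈ range n, 1 - a * Q ^ j = -a * Q ^ j * (1 - b * Q ^ (n - 1 - j)) := by
    intro j hj
    have hn : n = j + (n - 1 - j) + 1 := by have := mem_range.1 hj; omega
    have hab' : a * b * Q ^ (j + (n - 1 - j)) = 1 := by
      rw [hn, pow_succ, ← mul_assoc] at hab
      exact mul_right_cancel₀ hQ (hab.trans (one_mul Q).symm)
    linear_combination -hab'
  rw [qPoch, prod_congr rfl hfactor, prod_mul_distrib, prod_mul_distrib, prod_const, card_range,
    prod_pow_eq_pow_sum, sum_range_id, ← Nat.choose_two_right,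
    prod_range_reflect (fun j => 1 - b * Q ^ j), qPoch]

theorem natCast_choose_two_mul_two (n : ℕ) : ((n.choose 2 : ℕ) : ℤ) * 2 = n * (n - 1) := by
  induction n with
  | zero => rfl
  | succ n ih => rw [Nat.choose_succ_succ', Nat.choose_one_right]; push_cast; linarith

theorem qPoch_mul_pow_eq_div {a Q : ℝ} {x : ℕ} (hx : qPoch a Q x ≠ 0) (y : ℕ) :
    qPoch (a * Q ^ x) Q y = qPoch a Q (x + y) / qPoch a Q x := by
  rw [eq_div_iff hx, qPoch_add, mul_comm]

theorem a2_term_eq (q : ℝ) (hq : 1 < q) {k m : ℕ} (hk : 1 ≤ k) (hkm : k ≤ m) :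
    (1 - q) * q ^ (-(2 * (k : ℤ) ^ 2) - k) / qPoch (q ^ (-2 : ℤ)) (q ^ (-2 : ℤ)) (k - 1)
        * (qPoch (q ^ (-(2 * (k : ℤ)))) (q ^ (-2 : ℤ)) (m - k)
            / qPoch (q ^ (-2 : ℤ)) (q ^ (-2 : ℤ)) (m - k))
        * q ^ (-(m : ℤ) + k)
    = q ^ (-(m : ℤ)) * (1 - q) * ((-1 : ℝ) ^ (k - 1)
          * (qPoch (q ^ (2 * (m : ℤ) - 2)) (q ^ (-2 : ℤ)) (k - 1)
              / (qPoch (q ^ (-2 : ℤ)) (q ^ (-2 : ℤ)) (k - 1)) ^ 2)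
          * q ^ (-((k - 1 : ℕ) : ℤ) ^ 2 - 3 * (k - 1 : ℕ) - 2 * (k - 1 : ℕ) * m - 2)) := by
  obtain ⟨s, rfl⟩ : ∃ s, k = s + 1 := ⟨k - 1, by omega⟩
  obtain ⟨n, rfl⟩ : ∃ n, m = s + 1 + n := ⟨m - (s + 1), by omega⟩
  simp only [Nat.add_sub_cancel, Nat.add_sub_cancel_left]
  push_cast
  have hq₀ : q ≠ 0 := by positivity
  set Q := q ^ (-2 : ℤ) with hQ
  have hQ₀ : 0 < Q := by positivity
  have hQ₁ : Q < 1 := zpow_lt_one_of_neg₀ hq (by norm_num)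
  have hP : ∀ j, qPoch Q Q j ≠ 0 := fun j => (qPoch_pos hQ₀.le hQ₁ hQ₀.le hQ₁.le j).ne'
  have hX : qPoch (q ^ (-(2 * ((s : ℤ) + 1)))) Q n = qPoch Q Q (s + n) / qPoch Q Q s := by
    rw [← qPoch_mul_pow_eq_div (hP s)]
    simp only [hQ, ← zpow_natCast, ← zpow_mul, ← zpow_add₀ hq₀]
    ring_nf
  have hY : qPoch (q ^ (2 * ((s : ℤ) + 1 + n) - 2)) Q s
      = (-q ^ (2 * ((s : ℤ) + 1 + n) - 2)) ^ s * Q ^ s.choose 2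
          * (qPoch Q Q (s + n) / qPoch Q Q n) := by
    rw [qPoch_eq_neg_pow_mul_qPoch (b := Q * Q ^ n) hQ₀.ne', qPoch_mul_pow_eq_div (hP n),
      add_comm n s]
    simp only [hQ, ← zpow_natCast, ← zpow_mul, ← zpow_add₀ hq₀]
    ring_nf
  have hpow : q ^ (-(2 * ((s : ℤ) + 1) ^ 2) - (s + 1)) * q ^ (-((s : ℤ) + 1 + n) + (s + 1))
      = q ^ (-((s : ℤ) + 1 + n)) * ((-1) ^ s * (-q ^ (2 * ((s : ℤ) + 1 + n) - 2)) ^ s)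
          * Q ^ s.choose 2 * q ^ (-(s : ℤ) ^ 2 - 3 * s - 2 * s * (s + 1 + n) - 2) := by
    have hchoose := natCast_choose_two_mul_two s
    rw [← mul_pow, neg_one_mul, neg_neg]
    simp only [hQ, ← zpow_natCast, ← zpow_mul, ← zpow_add₀ hq₀]
    congr 1
    linear_combination hchoose
  have hPs := hP s
  have hPn := hP n
  rw [hX, hY]
  field_simp
  linear_combination (1 - q) * qPoch Q Q (s + n) * hpow

theorem anzanello_a2_sum_general (q : ℝ) (hq : 1 < q) (m : ℕ) :
    ∑ k ∈ Finset.Icc 1 m,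
      (1 - q) * q ^ (-(2 * (k : ℤ) ^ 2) - k) / qPoch (q ^ (-2 : ℤ)) (q ^ (-2 : ℤ)) (k - 1)
        * (qPoch (q ^ (-(2 * (k : ℤ)))) (q ^ (-2 : ℤ)) (m - k)
            / qPoch (q ^ (-2 : ℤ)) (q ^ (-2 : ℤ)) (m - k))
        * q ^ (-(m : ℤ) + k)
    = q ^ (-(m : ℤ)) * (1 - q) * ∑ s ∈ Finset.range m,
        (-1 : ℝ) ^ s
          * (qPoch (q ^ (2 * (m : ℤ) - 2)) (q ^ (-2 : ℤ)) s
              / (qPoch (q ^ (-2 : ℤ)) (q ^ (-2 : ℤ)) s) ^ 2)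
          * q ^ (-(s : ℤ) ^ 2 - 3 * s - 2 * s * m - 2) := by
  rw [sum_congr rfl fun k hk => a2_term_eq q hq (mem_Icc.1 hk).1 (mem_Icc.1 hk).2, ← mul_sum,
    ← Ico_add_one_right_eq_Icc, sum_Ico_eq_sum_range, Nat.add_sub_cancel]
  simp only [Nat.add_sub_cancel_left]

theorem anzanello_a2_sum (q : ℝ) (hq : 1 < q) (m : ℕ) (hm : 1 ≤ m) :
    ∑ k ∈ Finset.Icc 1 m,
      (1 - q) * q ^ (-(2 * (k : ℤ) ^ 2) - k) / qPoch (q ^ (-2 : ℤ)) (q ^ (-2 : ℤ)) (k - 1)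
        * (qPoch (q ^ (-(2 * (k : ℤ)))) (q ^ (-2 : ℤ)) (m - k)
            / qPoch (q ^ (-2 : ℤ)) (q ^ (-2 : ℤ)) (m - k))
        * q ^ (-(m : ℤ) + k)
    = q ^ (-(m : ℤ)) * (1 - q) * ∑ s ∈ Finset.range m,
        (-1 : ℝ) ^ s
          * (qPoch (q ^ (2 * (m : ℤ) - 2)) (q ^ (-2 : ℤ)) s
              / (qPoch (q ^ (-2 : ℤ)) (q ^ (-2 : ℤ)) s) ^ 2)
          * q ^ (-(s : ℤ) ^ 2 - 3 * s - 2 * s * m - 2) :=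
  anzanello_a2_sum_general q hq m
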